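/- For any ε > 0 and any real u, the inequality 0 ≤ |u| - u·tanh(u/ε) ≤ δε holds, where δ = 0.2785; that is, 0 ≤ |u| - u·tanh(u/ε) ≤ 0.2785·ε. -/
import Mathlib

lemma exp_c_lb : (3.591 : ℝ) ≤ Real.exp 1.2785 := by
  have h1 : Real.exp 1.2785 = Real.exp 1 * Real.exp 0.2785 := by
    rw [← Real.exp_add]; norm_num
  have h2 : (2.7182818283 : ℝ) < Real.exp 1 := Real.exp_one_gt_d9
  have h3 : ∑ i ∈ Finset.range 6, (0.2785:ℝ) ^ i / (Nat.factorial i) ≤ Real.exp 0.2785 :=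
    Real.sum_le_exp_of_nonneg (by norm_num) 6
  have h4 : (1.3211 : ℝ) ≤ ∑ i ∈ Finset.range 6, (0.2785:ℝ) ^ i / (Nat.factorial i) := by
    simp [Finset.sum_range_succ, Nat.factorial]
    norm_num
  nlinarith [Real.exp_pos (0.2785 : ℝ)]

lemma key (t : ℝ) (ht : 0 ≤ t) : t ≤ 0.2785 * (Real.exp t + 1) := by
  rcases le_or_gt t 0.5 with h | h
  · have h1 : t + 1 ≤ Real.exp t := Real.add_one_le_exp t
    nlinarith
  · have h1 : (t - 1.2785) + 1 ≤ Real.exp (t - 1.2785) := Real.add_one_le_exp _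
    have h2 : Real.exp t = Real.exp 1.2785 * Real.exp (t - 1.2785) := by
      rw [← Real.exp_add]; ring_nf
    nlinarith [exp_c_lb, Real.exp_pos (t - 1.2785)]

lemma core (x : ℝ) (hx : 0 ≤ x) : x - x * Real.tanh x ≤ 0.2785 := by
  have hth : Real.tanh x = (Real.exp x - Real.exp (-x)) / (Real.exp x + Real.exp (-x)) := by
    rw [Real.tanh_eq_sinh_div_cosh, Real.sinh_eq, Real.cosh_eq]
    have h1 := Real.exp_pos x
    have h2 := Real.exp_pos (-x)
    field_simp
  have hd : (0:ℝ) < Real.exp x + Real.exp (-x) := by positivity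
  have hab : Real.exp x * Real.exp (-x) = 1 := by rw [← Real.exp_add]; simp
  have hk := key (2 * x) (by linarith)
  have he2 : Real.exp (2 * x) = Real.exp x ^ 2 := by
    rw [two_mul, Real.exp_add, sq]
  rw [he2] at hk
  have heq : x - x * Real.tanh x = 2 * x * Real.exp (-x) / (Real.exp x + Real.exp (-x)) := by
    rw [hth]
    field_simp
    ring
  rw [heq, div_le_iff₀ hd]
  nlinarith [Real.exp_pos x, Real.exp_pos (-x),
    mul_le_mul_of_nonneg_right hk (Real.exp_pos (-x)).le]

lemma abs_tanh_le (x : ℝ) : |Real.tanh x| ≤ 1 := by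
  have hth : Real.tanh x = (Real.exp x - Real.exp (-x)) / (Real.exp x + Real.exp (-x)) := by
    rw [Real.tanh_eq_sinh_div_cosh, Real.sinh_eq, Real.cosh_eq]
    have h1 := Real.exp_pos x
    have h2 := Real.exp_pos (-x)
    field_simp
  have hd : (0:ℝ) < Real.exp x + Real.exp (-x) := by positivity
  rw [hth, abs_div, abs_of_pos hd, div_le_one hd]
  have := Real.exp_pos x
  have := Real.exp_pos (-x)
  rw [abs_le]
  constructor <;> nlinarith

theorem tanh_robust_bound (ε u : ℝ) (hε : 0 < ε) :
    0 ≤ |u| - u * Real.tanh (u / ε) ∧ |u| - u * Real.tanh (u / ε) ≤ 0.2785 * ε := by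
  constructor
  · have h1 : u * Real.tanh (u / ε) ≤ |u * Real.tanh (u / ε)| := le_abs_self _
    have h2 : |u * Real.tanh (u / ε)| = |u| * |Real.tanh (u / ε)| := abs_mul _ _
    have h3 := abs_tanh_le (u / ε)
    nlinarith [abs_nonneg u]
  · rcases le_or_gt 0 u with hu | hu
    · have hx0 : 0 ≤ u / ε := div_nonneg hu hε.le
      have hc := core (u / ε) hx0
      have habs : |u| = u := abs_of_nonneg hu
      have : u = ε * (u / ε) := by field_simp
      rw [habs]
      calc u - u * Real.tanh (u / ε) = ε * ((u / ε) - (u / ε) * Real.tanh (u / ε)) := by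
            field_simp
            try ring
        _ ≤ ε * 0.2785 := by
            exact mul_le_mul_of_nonneg_left hc hε.le
        _ = 0.2785 * ε := by ring
    · have hx0 : 0 ≤ -(u / ε) := by
        have : u / ε < 0 := div_neg_of_neg_of_pos hu hε
        linarith
      have hc := core (-(u / ε)) hx0
      rw [Real.tanh_neg] at hc
      have habs : |u| = -u := abs_of_neg hu
      rw [habs]
      calc -u - u * Real.tanh (u / ε) = ε * (-(u / ε) - -(u / ε) * -Real.tanh (u / ε)) := by
            field_simp
            try ring
        _ ≤ ε * 0.2785 := mul_le_mul_of_nonneg_left hc hε.le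
        _ = 0.2785 * ε := by ring
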